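/- arXiv:1009.3888 — 8 statements merged into one kernel-verified Lean document; each statement's English description precedes it below -/
import Mathlib

section
/- Let f : ℝ^N → ℝ be continuous, with a global maximum at θ*, such that every local maximum of f is a global maximum. Fix ε > 0 and θ with f(θ) ≤ f(θ*) − ε. Then for every ξ > 0 there exists a nonempty open set A ⊆ B(θ, ξ) such that f(a) > f(θ) for every a ∈ A. -/
/-- Proposition 1 (core claim): for any `θ` outside the ε-convergence region and any
radius `ξ > 0`, there is a nonempty open set `A ⊆ B(θ, ξ)` on which `f` is strictly
larger than `f θ`. -/
theorem exists_open_improvement_set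
    {N : ℕ} (f : EuclideanSpace ℝ (Fin N) → ℝ) (hf : Continuous f)
    (θs : EuclideanSpace ℝ (Fin N)) (hmax : ∀ θ, f θ ≤ f θs)
    (hloc : ∀ θ, (∃ δ > 0, ∀ ψ ∈ Metric.ball θ δ, f ψ ≤ f θ) → f θ = f θs)
    (ε : ℝ) (hε : 0 < ε)
    (θ : EuclideanSpace ℝ (Fin N)) (hθ : f θ ≤ f θs - ε) :
    ∀ ξ > 0, ∃ A : Set (EuclideanSpace ℝ (Fin N)),
      IsOpen A ∧ A.Nonempty ∧ A ⊆ Metric.ball θ ξ ∧ ∀ a ∈ A, f θ < f a := by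
  intro ξ hξ
  -- There must be a point in the ball with larger value, else θ is a local max.
  have h : ∃ a ∈ Metric.ball θ ξ, f θ < f a := by
    by_contra h
    push_neg at h
    have := hloc θ ⟨ξ, hξ, h⟩
    linarith
  obtain ⟨a, ha, hfa⟩ := h
  refine ⟨Metric.ball θ ξ ∩ f ⁻¹' Set.Ioi (f θ), ?_, ⟨a, ha, hfa⟩, Set.inter_subset_left, ?_⟩
  · exact Metric.isOpen_ball.inter (isOpen_Ioi.preimage hf)
  · exact fun b hb => hb.2
end

section
/- Let f : ℝ^N → ℝ be continuous with global maximum at θ*, such that every local maximum is global, and fix ε > 0 and θ with f(θ) ≤ f(θ*) − ε. Let Γ ⊆ ℝ^N be a set having 0 as an interior point. Then there exists a nonempty open set A contained in (θ + Γ) ∩ {ψ : f(ψ) > f(θ)}. -/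
/-- Proposition 1: if `0` is an interior point of `Γ` (the range of the transformation
of the random perturbation) and `θ` lies outside the ε-convergence region, then there is
a nonempty open set contained in `(θ + Γ) ∩ {ψ | f ψ > f θ}`. -/
theorem exists_open_improvement_in_shifted_range
    {N : ℕ} (f : EuclideanSpace ℝ (Fin N) → ℝ) (hf : Continuous f)
    (θs : EuclideanSpace ℝ (Fin N)) (hmax : ∀ θ, f θ ≤ f θs)
    (hloc : ∀ θ, (∃ δ > 0, ∀ ψ ∈ Metric.ball θ δ, f ψ ≤ f θ) → f θ = f θs)
    (ε : ℝ) (hε : 0 < ε)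
    (Γ : Set (EuclideanSpace ℝ (Fin N))) (hΓ : (0 : EuclideanSpace ℝ (Fin N)) ∈ interior Γ)
    (θ : EuclideanSpace ℝ (Fin N)) (hθ : f θ ≤ f θs - ε) :
    ∃ A : Set (EuclideanSpace ℝ (Fin N)), IsOpen A ∧ A.Nonempty ∧
      A ⊆ ((fun g => θ + g) '' Γ) ∩ {ψ | f θ < f ψ} := by
  obtain ⟨δ, hδ, hball⟩ := Metric.isOpen_iff.mp isOpen_interior 0 hΓ
  have hballΓ : Metric.ball (0 : EuclideanSpace ℝ (Fin N)) δ ⊆ Γ :=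
    hball.trans interior_subset
  have hne : ¬ ∀ ψ ∈ Metric.ball θ δ, f ψ ≤ f θ := by
    intro h
    have := hloc θ ⟨δ, hδ, h⟩
    linarith [hmax θ]
  push_neg at hne
  obtain ⟨ψ, hψmem, hψ⟩ := hne
  refine ⟨Metric.ball θ δ ∩ f ⁻¹' Set.Ioi (f θ), Metric.isOpen_ball.inter
    (isOpen_Ioi.preimage hf), ⟨ψ, hψmem, hψ⟩, ?_⟩
  rintro x ⟨hx1, hx2⟩
  refine ⟨⟨x - θ, hballΓ ?_, by module⟩, hx2⟩
  simpa [Metric.mem_ball, dist_eq_norm] using Metric.mem_ball.mp hx1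
end

section
/- Let f : ℝ^N → ℝ be continuous with global maximum at θ*, every local maximum global, and let μ be a Borel probability measure on ℝ^N that assigns positive measure to every nonempty open subset of its support, with 0 an interior point of supp(μ). Then for any fixed θ with f(θ) ≤ f(θ*) − ε, there exist γ(θ) > 0 and η(θ) > 0 such that μ({δ : f(θ + δ) − f(θ) ≥ γ(θ)}) ≥ η(θ). -/
open MeasureTheory

/-- The (topological) support of a measure: points all of whose open neighborhoods
have positive measure. -/
def measSupport {N : ℕ} (μ : Measure (EuclideanSpace ℝ (Fin N))) :
    Set (EuclideanSpace ℝ (Fin N)) :=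
  {x | ∀ U : Set (EuclideanSpace ℝ (Fin N)), IsOpen U → x ∈ U → 0 < μ U}

/-- Proposition 2 (pointwise version, with `G_n` the identity): if `0` is an interior
point of the support of the perturbation measure `μ`, `μ` gives positive mass to every
open set meeting its support, and `θ` lies outside the ε-convergence region, then there
exist `γ(θ) > 0` and `η(θ) > 0` such that the perturbation improves `f` by at least
`γ(θ)` with probability at least `η(θ)`. -/
theorem exists_positive_improvement_probability
    {N : ℕ} (f : EuclideanSpace ℝ (Fin N) → ℝ) (hf : Continuous f)
    (θs : EuclideanSpace ℝ (Fin N)) (hmax : ∀ θ, f θ ≤ f θs)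
    (hloc : ∀ θ, (∃ δ > 0, ∀ ψ ∈ Metric.ball θ δ, f ψ ≤ f θ) → f θ = f θs)
    (ε : ℝ) (hε : 0 < ε)
    (μ : Measure (EuclideanSpace ℝ (Fin N))) [IsProbabilityMeasure μ]
    (h0 : (0 : EuclideanSpace ℝ (Fin N)) ∈ interior (measSupport μ))
    (hpos : ∀ U : Set (EuclideanSpace ℝ (Fin N)), IsOpen U →
      (U ∩ measSupport μ).Nonempty → 0 < μ U)
    (θ : EuclideanSpace ℝ (Fin N)) (hθ : f θ ≤ f θs - ε) :
    ∃ γ > (0 : ℝ), ∃ η : ENNReal, 0 < η ∧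
      η ≤ μ {δ : EuclideanSpace ℝ (Fin N) | γ ≤ f (θ + δ) - f θ} := by
  -- get a ball around 0 inside the support
  obtain ⟨r, hr, hball⟩ := Metric.mem_nhds_iff.mp (mem_interior_iff_mem_nhds.mp h0)
  -- θ is not a local max on ball θ r
  have hne : f θ ≠ f θs := by linarith
  have hnotloc : ¬ ∀ ψ ∈ Metric.ball θ r, f ψ ≤ f θ := by
    intro h
    exact hne (hloc θ ⟨r, hr, h⟩)
  push_neg at hnotloc
  obtain ⟨ψ, hψmem, hψ⟩ := hnotloc
  set δ0 : EuclideanSpace ℝ (Fin N) := ψ - θ with hδ0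
  have hθδ0 : θ + δ0 = ψ := by simp [hδ0]
  set γ : ℝ := (f ψ - f θ) / 2 with hγ
  have hγpos : 0 < γ := by simp [hγ]; linarith
  refine ⟨γ, hγpos, ?_⟩
  set V : Set (EuclideanSpace ℝ (Fin N)) := {δ | f θ + γ < f (θ + δ)} with hV
  have hVopen : IsOpen V := by
    have : Continuous fun δ : EuclideanSpace ℝ (Fin N) => f (θ + δ) :=
      hf.comp (continuous_const.add continuous_id)
    exact isOpen_lt continuous_const this
  have hδ0V : δ0 ∈ V := by
    simp only [hV, Set.mem_setOf_eq, hθδ0]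
    linarith
  have hδ0supp : δ0 ∈ measSupport μ := by
    apply hball
    simp only [Metric.mem_ball, hδ0]
    rw [dist_eq_norm, sub_zero, ← dist_eq_norm]
    exact Metric.mem_ball.mp hψmem
  have hμV : 0 < μ V := hpos V hVopen ⟨δ0, hδ0V, hδ0supp⟩
  refine ⟨μ V, hμV, measure_mono ?_⟩
  intro δ hδ
  simp only [hV, Set.mem_setOf_eq] at hδ ⊢
  linarith
end

section
/- Suppose (X_n) is an adapted real-valued process with X_{n+1} ≥ X_n a.s., X_n ≤ f* a.s., and there exist γ > 0 and η ∈ (0, 1] such that for every n, on the event {X_n ≤ f* − ε}, P(X_{n+1} − X_n ≥ γ | ℱ_n) ≥ η. Then P(X_n > f* − ε) → 1 as n → ∞. -/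
/-!
Lévy's conditional Borel–Cantelli lemma: since `P(jump ≥ γ | ℱₙ) ≥ η` on `{Xₙ ≤ f* - ε}`, a path
staying in this region forever makes a jump of size `γ` infinitely often, almost surely. A
non-decreasing sequence bounded by `f*` converges, so its increments eventually drop below `γ`.
Hence almost every path eventually leaves the region for good, and convergence almost
everywhere of the indicators gives convergence of the probabilities.
-/

open MeasureTheory Filter Finset

lemma tendsto_sum_range_atTop_of_eventually_ge {f : ℕ → ℝ} {η : ℝ} (hη : 0 < η)
    (hf : ∀ᶠ k in atTop, η ≤ f k) : Tendsto (fun n => ∑ k ∈ range n, f k) atTop atTop := by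
  obtain ⟨N, hN⟩ := eventually_atTop.1 hf
  rw [← tendsto_add_atTop_iff_nat N]
  have hlower : ∀ n : ℕ, ∑ k ∈ range N, f k + n * η ≤ ∑ k ∈ range (n + N), f k := by
    intro n
    rw [add_comm n N, sum_range_add]
    gcongr
    simpa using card_nsmul_le_sum (range n) (fun k => f (N + k)) η
      fun k _ => hN _ (Nat.le_add_right N k)
  exact tendsto_atTop_mono hlower
    (tendsto_atTop_add_const_left _ _ (tendsto_natCast_atTop_atTop.atTop_mul_const hη))

lemma Monotone.eventually_sub_lt {x : ℕ → ℝ} (hx : Monotone x) (hbdd : BddAbove (Set.range x))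
    {γ : ℝ} (hγ : 0 < γ) : ∀ᶠ n in atTop, x (n + 1) - x n < γ := by
  have hlim := tendsto_atTop_ciSup hx hbdd
  have hincr : Tendsto (fun n => x (n + 1) - x n) atTop (nhds 0) := by
    simpa using (hlim.comp (tendsto_add_atTop_nat 1)).sub hlim
  exact hincr.eventually_lt_const hγ

lemma Monotone.eventually_lt_of_frequently_jump {x : ℕ → ℝ} (hx : Monotone x)
    (hbdd : BddAbove (Set.range x)) {c γ : ℝ} (hγ : 0 < γ)
    (hjump : (∀ n, x n ≤ c) → ∃ᶠ n in atTop, γ ≤ x (n + 1) - x n) :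
    ∀ᶠ n in atTop, c < x n := by
  by_cases hstay : ∀ n, x n ≤ c
  · exact absurd (hjump hstay) (by simpa using hx.eventually_sub_lt hbdd hγ)
  · push Not at hstay
    obtain ⟨N, hN⟩ := hstay
    exact eventually_atTop.2 ⟨N, fun n hn => hN.trans_le (hx hn)⟩

namespace MeasureTheory

variable {Ω : Type*} {m m0 : MeasurableSpace Ω}

theorem ae_frequently_mem_of_eventually_condExp_indicator_ge (μ : Measure Ω) [IsFiniteMeasure μ]
    {ℱ : Filtration ℕ m0} {t : ℕ → Set Ω} (ht : ∀ n, MeasurableSet[ℱ (n + 1)] (t n))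
    {η : ℝ} (hη : 0 < η) :
    ∀ᵐ ω ∂μ, (∀ᶠ n in atTop, η ≤ μ[(t n).indicator (1 : Ω → ℝ) | ℱ n] ω) →
      ∃ᶠ n in atTop, ω ∈ t n := by
  let s : ℕ → Set Ω := fun | 0 => ∅ | k + 1 => t k
  have hs : ∀ n, MeasurableSet[ℱ n] (s n) := by
    rintro (_ | k)
    exacts [@MeasurableSet.empty _ (ℱ 0), ht k]
  filter_upwards [ae_mem_limsup_atTop_iff μ hs] with ω hω hev
  rw [← limsup_nat_add s 1, mem_limsup_iff_frequently_mem] at hω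
  exact hω.2 (tendsto_sum_range_atTop_of_eventually_ge hη hev)

theorem ae_condExp_indicator_inter_eq (μ : Measure Ω) [IsFiniteMeasure μ]
    {B G : Set Ω} (hB : MeasurableSet[m] B) (hG : MeasurableSet G) :
    ∀ᵐ ω ∂μ, ω ∈ B → μ[(B ∩ G).indicator (1 : Ω → ℝ) | m] ω = μ[G.indicator 1 | m] ω := by
  have hind : (B ∩ G).indicator (1 : Ω → ℝ) = B.indicator (G.indicator 1) :=
    (Set.indicator_indicator B G 1).symm
  filter_upwards [condExp_indicator ((integrable_const (1 : ℝ)).indicator hG) hB] with ω hω hωB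
  rw [hind]
  exact hω.trans (Set.indicator_of_mem hωB _)

end MeasureTheory

theorem drift_convergence_in_probability_general
    {Ω : Type*} {m0 : MeasurableSpace Ω} (μ : Measure Ω) [IsProbabilityMeasure μ]
    (ℱ : Filtration ℕ m0) (X : ℕ → Ω → ℝ) (hadap : Adapted ℱ X)
    (fstar ε γ η : ℝ) (hγ : 0 < γ) (hη : 0 < η)
    (hmono : ∀ n, ∀ᵐ ω ∂μ, X n ω ≤ X (n + 1) ω)
    (hbdd : ∀ n, ∀ᵐ ω ∂μ, X n ω ≤ fstar)
    (hdrift : ∀ n, ∀ᵐ ω ∂μ, X n ω ≤ fstar - ε →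
      η ≤ (μ[Set.indicator {ω' | γ ≤ X (n + 1) ω' - X n ω'} (fun _ => (1 : ℝ)) | ℱ n]) ω) :
    Tendsto (fun n => (μ {ω | fstar - ε < X n ω}).toReal) atTop (nhds 1) := by
  set B : ℕ → Set Ω := fun n => {ω | X n ω ≤ fstar - ε}
  set G : ℕ → Set Ω := fun n => {ω | γ ≤ X (n + 1) ω - X n ω}
  have hB : ∀ n, MeasurableSet[ℱ n] (B n) := fun n => measurableSet_le (hadap n) measurable_const
  have hG : ∀ n, MeasurableSet[ℱ (n + 1)] (G n) := fun n => measurableSet_le measurable_const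
    ((hadap (n + 1)).sub ((hadap n).mono (ℱ.mono n.le_succ) le_rfl))
  have hjump : ∀ n, ∀ᵐ ω ∂μ, ω ∈ B n →
      η ≤ μ[(B n ∩ G n).indicator (1 : Ω → ℝ) | ℱ n] ω := fun n => by
    filter_upwards [hdrift n, ae_condExp_indicator_inter_eq μ (hB n) (ℱ.le _ _ (hG n))]
      with ω hdriftω hinter hωB
    exact (hinter hωB).symm ▸ hdriftω hωB
  have hleave : ∀ᵐ ω ∂μ, ∀ᶠ n in atTop, fstar - ε < X n ω := by
    filter_upwards [ae_frequently_mem_of_eventually_condExp_indicator_ge μ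
      (fun n => (ℱ.mono n.le_succ _ (hB n)).inter (hG n)) hη, ae_all_iff.2 hjump,
      ae_all_iff.2 hmono, ae_all_iff.2 hbdd] with ω hfreq hjumpω hmonoω hbddω
    refine (monotone_nat_of_le_succ hmonoω).eventually_lt_of_frequently_jump
      ⟨fstar, Set.forall_mem_range.2 hbddω⟩ hγ fun hstay => ?_
    exact (hfreq (Eventually.of_forall fun n => hjumpω n (hstay n))).mono fun n hn => hn.2
  have hprob := tendsto_measure_of_ae_tendsto_indicator_of_isFiniteMeasure atTop
    MeasurableSet.univ (fun n => ℱ.le n _ (measurableSet_lt measurable_const (hadap n)))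
    (hleave.mono fun ω hω => hω.mono fun n hn => iff_of_true hn (Set.mem_univ ω))
  rw [measure_univ] at hprob
  exact (ENNReal.tendsto_toReal ENNReal.one_ne_top).comp hprob

/-- Abstract drift lemma (Theorem 1): an adapted, a.s. non-decreasing process bounded
above by `fstar`, which on the event `{X n ≤ fstar - ε}` has conditional probability at
least `η` of improving by at least `γ`, eventually lies in the ε-convergence region
with probability tending to one. -/
theorem drift_convergence_in_probability
    {Ω : Type*} {m0 : MeasurableSpace Ω} (μ : Measure Ω) [IsProbabilityMeasure μ]
    (ℱ : Filtration ℕ m0) (X : ℕ → Ω → ℝ) (hadap : Adapted ℱ X)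
    (fstar ε γ η : ℝ) (hε : 0 < ε) (hγ : 0 < γ) (hη : 0 < η) (hη1 : η ≤ 1)
    (hmono : ∀ n, ∀ᵐ ω ∂μ, X n ω ≤ X (n + 1) ω)
    (hbdd : ∀ n, ∀ᵐ ω ∂μ, X n ω ≤ fstar)
    (hdrift : ∀ n, ∀ᵐ ω ∂μ, X n ω ≤ fstar - ε →
      η ≤ (μ[Set.indicator {ω' | γ ≤ X (n + 1) ω' - X n ω'} (fun _ => (1 : ℝ)) | ℱ n]) ω) :
    Tendsto (fun n => (μ {ω | fstar - ε < X n ω}).toReal) atTop (nhds 1) :=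
  drift_convergence_in_probability_general μ ℱ X hadap fstar ε γ η hγ hη hmono hbdd hdrift
end

section
/- Under the hypotheses of the previous drift lemma (monotone non-decreasing X_n bounded above by f*, with conditional probability at least η of gaining at least γ whenever X_n ≤ f* − ε), the expected hitting time T := inf{n : X_n > f* − ε} satisfies E[T] ≤ ⌈(f* − X_0)/γ⌉ / η. -/
open MeasureTheory

/-!
Since `T` is at most the number of times `n` with `X n ≤ fstar - ε`, its expectation is at most
`∑ₙ P(X n ≤ fstar - ε)`. By the drift hypothesis, `η · P(X n ≤ fstar - ε)` is at most the
probability of a gain of size `γ` at step `n`. A monotone path started at `x0` and bounded by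
`fstar` makes at most `⌈(fstar - x0) / γ⌉` such gains, so the sum of these probabilities, which is
the expected number of gains, is at most `⌈(fstar - x0) / γ⌉`.
-/

open Finset ENNReal

theorem iInf_mem_natCast_le_tsum_indicator_compl (s : Set ℕ) :
    ⨅ n ∈ s, (n : ℝ≥0∞) ≤ ∑' n, sᶜ.indicator 1 n := by
  by_cases hs : s.Nonempty
  · classical
    let m := Nat.find hs
    have hbefore : ∀ n ∈ range m, sᶜ.indicator (1 : ℕ → ℝ≥0∞) n = 1 := fun n hn =>
      Set.indicator_of_mem (Nat.find_min hs (mem_range.1 hn)) _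
    calc ⨅ n ∈ s, (n : ℝ≥0∞) ≤ m := iInf₂_le m (Nat.find_spec hs)
      _ = ∑ n ∈ range m, sᶜ.indicator 1 n := by simp [sum_congr rfl hbefore]
      _ ≤ ∑' n, sᶜ.indicator 1 n := ENNReal.sum_le_tsum _
  · have hcompl : sᶜ = Set.univ := by
      simpa [Set.not_nonempty_iff_eq_empty] using hs
    simp [hcompl]

section

variable {Ω : Type*} {m0 : MeasurableSpace Ω} {μ : Measure Ω}

theorem lintegral_tsum_indicator_one {t : ℕ → Set Ω} (ht : ∀ n, MeasurableSet (t n)) :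
    ∫⁻ ω, ∑' n, (t n).indicator 1 ω ∂μ = ∑' n, μ (t n) := by
  rw [lintegral_tsum fun n => (measurable_one.indicator (ht n)).aemeasurable]
  exact tsum_congr fun n => lintegral_indicator_one (ht n)

theorem lintegral_iInf_mem_le_tsum_measure_compl {s : ℕ → Set Ω} (hs : ∀ n, MeasurableSet (s n)) :
    ∫⁻ ω, ⨅ n ∈ {n | ω ∈ s n}, (n : ℝ≥0∞) ∂μ ≤ ∑' n, μ (s n)ᶜ :=
  calc ∫⁻ ω, ⨅ n ∈ {n | ω ∈ s n}, (n : ℝ≥0∞) ∂μ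
      ≤ ∫⁻ ω, ∑' n, (s n)ᶜ.indicator 1 ω ∂μ :=
        lintegral_mono fun ω => iInf_mem_natCast_le_tsum_indicator_compl {n | ω ∈ s n}
    _ = ∑' n, μ (s n)ᶜ := lintegral_tsum_indicator_one fun n => (hs n).compl

theorem tsum_measure_le_of_ae_sum_indicator_le {t : ℕ → Set Ω} (ht : ∀ n, MeasurableSet (t n))
    {c : ℝ≥0∞} (h : ∀ᵐ ω ∂μ, ∀ N, ∑ n ∈ range N, (t n).indicator 1 ω ≤ c) :
    ∑' n, μ (t n) ≤ c * μ Set.univ :=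
  calc ∑' n, μ (t n) = ∫⁻ ω, ∑' n, (t n).indicator 1 ω ∂μ :=
        (lintegral_tsum_indicator_one ht).symm
    _ ≤ ∫⁻ _, c ∂μ := lintegral_mono_ae (h.mono fun _ hω => ENNReal.tsum_le_of_sum_range_le hω)
    _ = c * μ Set.univ := lintegral_const c

theorem ofReal_mul_measure_le_measure_inter_of_le_condExp [IsFiniteMeasure μ]
    {m : MeasurableSpace Ω} (hm : m ≤ m0) {s t : Set Ω} (hs : MeasurableSet[m] s)
    (ht : MeasurableSet[m0] t) {η : ℝ}
    (h : ∀ᵐ ω ∂μ, ω ∈ s → η ≤ μ[t.indicator (fun _ => (1 : ℝ)) | m] ω) :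
    ENNReal.ofReal η * μ s ≤ μ (s ∩ t) := by
  have hreal : η * μ.real s ≤ μ.real (s ∩ t) :=
    calc η * μ.real s = ∫ _ in s, η ∂μ := by rw [setIntegral_const, smul_eq_mul, mul_comm]
      _ ≤ ∫ ω in s, μ[t.indicator (fun _ => (1 : ℝ)) | m] ω ∂μ :=
          setIntegral_mono_ae_restrict (integrableOn_const (measure_ne_top _ _))
            integrable_condExp.integrableOn ((ae_restrict_iff' (hm s hs)).2 h)
      _ = ∫ ω in s, t.indicator (fun _ => (1 : ℝ)) ω ∂μ :=
          setIntegral_condExp hm ((integrable_const 1).indicator ht) hs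
      _ = μ.real (s ∩ t) := by
          rw [integral_indicator_const _ ht, measureReal_restrict_apply ht, smul_eq_mul, mul_one,
            Set.inter_comm]
  calc ENNReal.ofReal η * μ s = ENNReal.ofReal (η * μ.real s) := by
        rw [ENNReal.ofReal_mul' measureReal_nonneg, ofReal_measureReal (measure_ne_top _ _)]
    _ ≤ ENNReal.ofReal (μ.real (s ∩ t)) := ENNReal.ofReal_le_ofReal hreal
    _ = μ (s ∩ t) := ofReal_measureReal (measure_ne_top _ _)

end

theorem mul_card_filter_le_sub_of_le_succ {x : ℕ → ℝ} (hx : ∀ k, x k ≤ x (k + 1)) (γ : ℝ) (N : ℕ) :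
    γ * #{k ∈ range N | γ ≤ x (k + 1) - x k} ≤ x N - x 0 := by
  rw [natCast_card_filter, mul_sum, ← sum_range_sub]
  refine sum_le_sum fun k _ => ?_
  split_ifs with hk
  · simpa using hk
  · simpa using hx k

theorem card_filter_le_ceil_of_le_succ {x : ℕ → ℝ} (hx : ∀ k, x k ≤ x (k + 1)) {b γ : ℝ}
    (hb : ∀ k, x k ≤ b) (hγ : 0 < γ) (N : ℕ) :
    #{k ∈ range N | γ ≤ x (k + 1) - x k} ≤ ⌈(b - x 0) / γ⌉₊ := by
  have hcard : (#{k ∈ range N | γ ≤ x (k + 1) - x k} : ℝ) ≤ (b - x 0) / γ := by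
    rw [le_div_iff₀ hγ, mul_comm]
    linarith [mul_card_filter_le_sub_of_le_succ hx γ N, hb N]
  exact_mod_cast hcard.trans (Nat.le_ceil _)

theorem expected_hitting_time_bound_general
    {Ω : Type*} {m0 : MeasurableSpace Ω} (μ : Measure Ω) [IsProbabilityMeasure μ]
    (ℱ : Filtration ℕ m0) (X : ℕ → Ω → ℝ) (hadap : Adapted ℱ X)
    (fstar ε γ η x0 : ℝ) (hγ : 0 < γ) (hη : 0 < η)
    (hX0 : X 0 = fun _ => x0)
    (hmono : ∀ n, ∀ᵐ ω ∂μ, X n ω ≤ X (n + 1) ω)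
    (hbdd : ∀ n, ∀ᵐ ω ∂μ, X n ω ≤ fstar)
    (hdrift : ∀ n, ∀ᵐ ω ∂μ, X n ω ≤ fstar - ε →
      η ≤ (μ[Set.indicator {ω' | γ ≤ X (n + 1) ω' - X n ω'} (fun _ => (1 : ℝ)) | ℱ n]) ω) :
    ∫⁻ ω, (⨅ n ∈ {n : ℕ | fstar - ε < X n ω}, (n : ENNReal)) ∂μ ≤
      ENNReal.ofReal ((⌈(fstar - x0) / γ⌉₊ : ℝ) / η) := by
  set K := ⌈(fstar - x0) / γ⌉₊
  set G : ℕ → Set Ω := fun n => {ω | γ ≤ X (n + 1) ω - X n ω}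
  have hXm (n : ℕ) : Measurable (X n) := (hadap n).mono (ℱ.le n) le_rfl
  have hG (n : ℕ) : MeasurableSet (G n) :=
    measurableSet_le measurable_const ((hXm (n + 1)).sub (hXm n))
  have hhit : ∫⁻ ω, (⨅ n ∈ {n : ℕ | fstar - ε < X n ω}, (n : ℝ≥0∞)) ∂μ
      ≤ ∑' n, μ {ω | X n ω ≤ fstar - ε} := by
    refine (lintegral_iInf_mem_le_tsum_measure_compl (s := fun n => {ω | fstar - ε < X n ω})
      fun n => measurableSet_lt measurable_const (hXm n)).trans_eq ?_
    simp only [Set.compl_ofPred, not_lt]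
  have hgain (n : ℕ) : ENNReal.ofReal η * μ {ω | X n ω ≤ fstar - ε} ≤ μ (G n) :=
    (ofReal_mul_measure_le_measure_inter_of_le_condExp (ℱ.le n)
      ((hadap n) measurableSet_Iic) (hG n) (hdrift n)).trans (measure_mono Set.inter_subset_right)
  have hcount : ∑' n, μ (G n) ≤ K := by
    simpa using tsum_measure_le_of_ae_sum_indicator_le (μ := μ) (c := K) hG <| by
      filter_upwards [ae_all_iff.2 hmono, ae_all_iff.2 hbdd] with ω hω hωb N
      simpa [G, Set.indicator_apply, hX0] using card_filter_le_ceil_of_le_succ hω hωb hγ N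
  calc _ ≤ ∑' n, μ {ω | X n ω ≤ fstar - ε} := hhit
    _ ≤ K / ENNReal.ofReal η := by
        rw [ENNReal.le_div_iff_mul_le (by simp [hη]) (by simp), mul_comm, ← ENNReal.tsum_mul_left]
        exact (ENNReal.tsum_le_tsum hgain).trans hcount
    _ = ENNReal.ofReal ((K : ℝ) / η) := by rw [ENNReal.ofReal_div_of_pos hη, ofReal_natCast]

/-- Expected hitting time bound: under the drift hypotheses (monotone process bounded by
`fstar`, deterministic start `x0`, and conditional probability at least `η` of a gain of
at least `γ` whenever `X n ≤ fstar - ε`), the hitting time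
`T = inf {n | X n > fstar - ε}` satisfies `E[T] ≤ ⌈(fstar - x0)/γ⌉ / η`. -/
theorem expected_hitting_time_bound
    {Ω : Type*} {m0 : MeasurableSpace Ω} (μ : Measure Ω) [IsProbabilityMeasure μ]
    (ℱ : Filtration ℕ m0) (X : ℕ → Ω → ℝ) (hadap : Adapted ℱ X)
    (fstar ε γ η x0 : ℝ) (hε : 0 < ε) (hγ : 0 < γ) (hη : 0 < η) (hη1 : η ≤ 1)
    (hX0 : X 0 = fun _ => x0)
    (hmono : ∀ n, ∀ᵐ ω ∂μ, X n ω ≤ X (n + 1) ω)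
    (hbdd : ∀ n, ∀ᵐ ω ∂μ, X n ω ≤ fstar)
    (hdrift : ∀ n, ∀ᵐ ω ∂μ, X n ω ≤ fstar - ε →
      η ≤ (μ[Set.indicator {ω' | γ ≤ X (n + 1) ω' - X n ω'} (fun _ => (1 : ℝ)) | ℱ n]) ω) :
    ∫⁻ ω, (⨅ n ∈ {n : ℕ | fstar - ε < X n ω}, (n : ENNReal)) ∂μ ≤
      ENNReal.ofReal ((⌈(fstar - x0) / γ⌉₊ : ℝ) / η) :=
  expected_hitting_time_bound_general μ ℱ X hadap fstar ε γ η x0 hγ hη hX0 hmono hbdd hdrift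
end

section
/- For a probability space with an event Z of probability p^N (p ∈ (0,1], N ∈ ℕ) and an event A with P(A | Z) ≥ η > 0, one has P(A) ≥ η p^N; consequently, if a monotone bounded process has at each step such a conditional improvement structure, the process still converges in probability to within ε of its supremum even though only a fraction of coordinates update at each step. -/
open MeasureTheory ProbabilityTheory Filter

/-!
Since `P(A) ≥ P(A ∩ Z) = P(A | Z) P(Z)`, every step of the asynchronous scheme improves the
objective by at least `γ` with conditional probability at least `c = η p^N > 0` as long as the
process stays `ε`-far from its supremum. On the event that it stays there forever the
conditional improvement probabilities sum to infinity, so by Lévy's conditional Borel–Cantelli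
lemma infinitely many `γ`-improvements occur, which a monotone process bounded above cannot
afford. Hence almost every path eventually enters the `ε`-region and, by monotonicity, stays
there; continuity from below turns this into convergence in probability.
-/

theorem mul_measure_le_of_le_cond {Ω : Type*} {m0 : MeasurableSpace Ω} {μ : Measure Ω}
    [IsFiniteMeasure μ] {Z : Set Ω} (hZ : MeasurableSet Z) {A : Set Ω}
    {c : ENNReal} (h : c ≤ (μ[|Z]) A) : c * μ Z ≤ μ A :=
  calc c * μ Z ≤ (μ[|Z]) A * μ Z := by gcongr
    _ = μ (Z ∩ A) := cond_mul_eq_inter hZ A μ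
    _ ≤ μ A := measure_mono Set.inter_subset_right

theorem mul_sum_ite_le_sub_of_le_succ {x : ℕ → ℝ} {b γ : ℝ}
    (hmono : ∀ n, x n ≤ x (n + 1)) (hb : ∀ n, x n ≤ b) (n : ℕ) :
    γ * ∑ k ∈ Finset.range n, (if γ ≤ x (k + 1) - x k then 1 else 0) ≤ b - x 0 := by
  have hstep : ∀ k, γ * (if γ ≤ x (k + 1) - x k then 1 else 0) ≤ x (k + 1) - x k := by
    intro k
    split_ifs with hk
    · simpa using hk
    · simpa using hmono k
  calc γ * ∑ k ∈ Finset.range n, (if γ ≤ x (k + 1) - x k then 1 else 0)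
      ≤ ∑ k ∈ Finset.range n, (x (k + 1) - x k) := by
        rw [Finset.mul_sum]
        exact Finset.sum_le_sum fun k _ => hstep k
    _ = x n - x 0 := Finset.sum_range_sub x n
    _ ≤ b - x 0 := by linarith [hb n]

theorem tendsto_measure_iUnion_of_ae_le_succ {Ω : Type*} {m0 : MeasurableSpace Ω}
    {μ : Measure Ω} {s : ℕ → Set Ω} (hs : ∀ n, s n ≤ᵐ[μ] s (n + 1)) :
    Tendsto (fun n => μ (s n)) atTop (nhds (μ (⋃ n, s n))) := by
  have hacc : ∀ n, Set.accumulate s n =ᵐ[μ] s n := by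
    intro n
    refine EventuallyLE.antisymm ?_ (Eventually.of_forall Set.subset_accumulate)
    filter_upwards [ae_all_iff.2 hs] with ω hω hmem
    obtain ⟨k, hk, hωk⟩ := Set.mem_accumulate.1 hmem
    exact monotone_nat_of_le_succ (f := fun k => ω ∈ s k) hω hk hωk
  simpa only [measure_congr (hacc _)] using tendsto_measure_iUnion_accumulate (μ := μ) (f := s)

section Escape

variable {Ω : Type*} {m0 : MeasurableSpace Ω} {μ : Measure Ω} [IsFiniteMeasure μ]
  {ℱ : Filtration ℕ m0} {X : ℕ → Ω → ℝ}

/-- Shifted by one so that the step `n → n + 1` is the `(n + 1)`-st event, as in Lévy's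
Borel–Cantelli lemma; at `n = 0` (truncated subtraction) this is the harmless `{γ ≤ 0}`. -/
theorem measurableSet_improvement (hadap : Adapted ℱ X) (γ : ℝ) (n : ℕ) :
    MeasurableSet[ℱ n] {ω | γ ≤ X n ω - X (n - 1) ω} :=
  measurableSet_le measurable_const
    ((hadap n).sub ((hadap (n - 1)).mono (ℱ.mono (Nat.sub_le n 1)) le_rfl))

theorem ae_exists_lt_of_condExp_improvement_ge (hadap : Adapted ℱ X) {a b γ c : ℝ}
    (hγ : 0 < γ) (hc : 0 < c)
    (hmono : ∀ n, ∀ᵐ ω ∂μ, X n ω ≤ X (n + 1) ω) (hbdd : ∀ n, ∀ᵐ ω ∂μ, X n ω ≤ b)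
    (hdrift : ∀ n, ∀ᵐ ω ∂μ, X n ω ≤ a →
      c ≤ (μ[Set.indicator {ω' | γ ≤ X (n + 1) ω' - X n ω'} (fun _ => (1 : ℝ)) | ℱ n]) ω) :
    ∀ᵐ ω ∂μ, ∃ n, a < X n ω := by
  filter_upwards [tendsto_sum_indicator_atTop_iff' (μ := μ)
      (measurableSet_improvement hadap γ), ae_all_iff.2 hmono, ae_all_iff.2 hbdd,
      ae_all_iff.2 hdrift] with ω hlevy hmono hbdd hdrift
  by_contra! hstay
  have hpredictable : Tendsto (fun n => ∑ k ∈ Finset.range n,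
      (μ[Set.indicator {ω' | γ ≤ X (k + 1) ω' - X k ω'} (1 : Ω → ℝ) | ℱ k]) ω)
      atTop atTop := by
    refine tendsto_atTop_mono (fun n => ?_) (tendsto_natCast_atTop_atTop.atTop_mul_const hc)
    calc (n : ℝ) * c = ∑ _k ∈ Finset.range n, c := by simp
      _ ≤ _ := Finset.sum_le_sum fun k _ => hdrift k (hstay k)
  have hbounded := mul_sum_ite_le_sub_of_le_succ (x := fun n => X n ω) (γ := γ) hmono hbdd
  obtain ⟨n, hn⟩ := ((hlevy.2 hpredictable).eventually_gt_atTop ((b - X 0 ω) / γ)).exists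
  simp only [Set.indicator_apply, Pi.one_apply, Nat.add_sub_cancel] at hn
  rw [div_lt_iff₀' hγ] at hn
  exact (hbounded n).not_gt hn

end Escape

theorem asynchronous_scheme_converges_general
    {Ω : Type*} {m0 : MeasurableSpace Ω} (μ : Measure Ω) [IsProbabilityMeasure μ]
    (N : ℕ) (p η : ℝ) (hp : 0 < p) (hη : 0 < η)
    (Z A : Set Ω) (hZ : MeasurableSet Z)
    (hZp : μ Z = ENNReal.ofReal p ^ N)
    (hcond : ENNReal.ofReal η ≤ (μ[|Z]) A)
    (ℱ : Filtration ℕ m0) (X : ℕ → Ω → ℝ) (hadap : Adapted ℱ X)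
    (fstar ε γ : ℝ) (hγ : 0 < γ)
    (hmono : ∀ n, ∀ᵐ ω ∂μ, X n ω ≤ X (n + 1) ω)
    (hbdd : ∀ n, ∀ᵐ ω ∂μ, X n ω ≤ fstar)
    (hdrift : ∀ n, ∀ᵐ ω ∂μ, X n ω ≤ fstar - ε →
      η * p ^ N ≤ (μ[Set.indicator {ω' | γ ≤ X (n + 1) ω' - X n ω'}
        (fun _ => (1 : ℝ)) | ℱ n]) ω) :
    ENNReal.ofReal η * ENNReal.ofReal p ^ N ≤ μ A ∧
      Tendsto (fun n => (μ {ω | fstar - ε < X n ω}).toReal) atTop (nhds 1) := by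
  refine ⟨hZp ▸ mul_measure_le_of_le_cond hZ hcond, ?_⟩
  have hescape := ae_exists_lt_of_condExp_improvement_ge hadap hγ (by positivity : 0 < η * p ^ N)
    hmono hbdd hdrift
  have hunion : μ (⋃ n, {ω | fstar - ε < X n ω}) = 1 := by
    rw [← measure_univ (μ := μ)]
    refine measure_congr ?_
    filter_upwards [hescape] with ω ⟨n, hn⟩
    exact eq_true (Set.mem_iUnion.2 ⟨n, hn⟩)
  have hlim := tendsto_measure_iUnion_of_ae_le_succ (μ := μ)
    (s := fun n => {ω | fstar - ε < X n ω})
    fun n => (hmono n).mono fun _ hle hlt => hlt.trans_le hle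
  rw [hunion] at hlim
  exact (ENNReal.tendsto_toReal ENNReal.one_ne_top).comp hlim

/-- (a) If `P(Z) = p^N` and `P(A | Z) ≥ η`, then `P(A) ≥ η p^N`; (b) consequently, a
monotone process bounded by `fstar` whose conditional improvement probability outside
the ε-convergence region is at least `η p^N` (as obtained from such a conditional
structure at every step) still converges in probability into the ε-convergence region,
even though only a fraction of the coordinates update at each step. -/
theorem asynchronous_scheme_converges
    {Ω : Type*} {m0 : MeasurableSpace Ω} (μ : Measure Ω) [IsProbabilityMeasure μ]
    (N : ℕ) (p η : ℝ) (hp : 0 < p) (hp1 : p ≤ 1) (hη : 0 < η) (hη1 : η ≤ 1)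
    (Z A : Set Ω) (hZ : MeasurableSet Z) (hA : MeasurableSet A)
    (hZp : μ Z = ENNReal.ofReal p ^ N)
    (hcond : ENNReal.ofReal η ≤ (μ[|Z]) A)
    (ℱ : Filtration ℕ m0) (X : ℕ → Ω → ℝ) (hadap : Adapted ℱ X)
    (fstar ε γ : ℝ) (hε : 0 < ε) (hγ : 0 < γ)
    (hmono : ∀ n, ∀ᵐ ω ∂μ, X n ω ≤ X (n + 1) ω)
    (hbdd : ∀ n, ∀ᵐ ω ∂μ, X n ω ≤ fstar)
    (hdrift : ∀ n, ∀ᵐ ω ∂μ, X n ω ≤ fstar - ε →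
      η * p ^ N ≤ (μ[Set.indicator {ω' | γ ≤ X (n + 1) ω' - X n ω'}
        (fun _ => (1 : ℝ)) | ℱ n]) ω) :
    ENNReal.ofReal η * ENNReal.ofReal p ^ N ≤ μ A ∧
      Tendsto (fun n => (μ {ω | fstar - ε < X n ω}).toReal) atTop (nhds 1) :=
  asynchronous_scheme_converges_general μ N p η hp hη Z A hZ hZp hcond ℱ X hadap fstar ε γ hγ hmono
    hbdd hdrift
end

section
/- Define Mag : ℝ^N → ℝ by Mag(θ) = |Σ_{i=1}^N a_i e^{jθ_i}| with all a_i > 0. Then every local maximum point of Mag is a global maximum point, with maximum value Σ_{i=1}^N a_i attained exactly when all phases θ_i are equal modulo 2π. -/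
/-!
Moving the single phase `θ k` turns `S = ∑ a i e^{iθ i}` into `u + a k e^{iθ k} e^{it}`. At a local
maximum of `‖S‖` this forces `conj S * e^{iθ k}` to be a positive real for every `k`; since all
`e^{iθ k}` have modulus one, they are then all equal to `S / ‖S‖`, and `‖S‖ = ∑ a i`. Conversely a
point where `‖S‖ = ∑ a i` is a global, hence a local, maximum.
-/

open Complex

open scoped ComplexOrder ComplexConjugate

namespace Complex

theorem nonneg_of_isLocalMax_re_mul_exp {c : ℂ}
    (h : IsLocalMax (fun t : ℝ => (c * exp (t * I)).re) 0) : 0 ≤ c := by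
  have hf : (fun t : ℝ => (c * exp (t * I)).re) =
      fun t => c.re * Real.cos t - c.im * Real.sin t := by
    ext t
    simp only [mul_re, exp_ofReal_mul_I_re, exp_ofReal_mul_I_im]
  rw [hf] at h
  have him : c.im = 0 := by
    have hd :=
      ((Real.hasDerivAt_cos 0).const_mul c.re).sub ((Real.hasDerivAt_sin 0).const_mul c.im)
    simpa using h.hasDerivAt_eq_zero hd
  obtain ⟨t, ht_le, ht_pos, ht_pi⟩ :=
    ((h.filter_mono nhdsWithin_le_nhds).and (Ioo_mem_nhdsGT Real.pi_pos)).exists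
  have hcos : Real.cos t < 1 := by
    simpa using Real.cos_lt_cos_of_nonneg_of_le_pi le_rfl ht_pi.le ht_pos
  simp only [him, Real.cos_zero, Real.sin_zero] at ht_le
  exact nonneg_iff.2 ⟨by nlinarith, him.symm⟩

theorem nonneg_conj_mul_of_isLocalMax_norm_add_mul_exp {u v : ℂ}
    (h : IsLocalMax (fun t : ℝ => ‖u + v * exp (t * I)‖) 0) : 0 ≤ conj u * v := by
  have hsq : ∀ t : ℝ, ‖u + v * exp (t * I)‖ ^ 2 =
      ‖u‖ ^ 2 + ‖v‖ ^ 2 + 2 * (conj u * v * exp (t * I)).re := by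
    intro t
    rw [norm_add_sq_real, Complex.inner, norm_mul, norm_exp_ofReal_mul_I]
    ring_nf
  refine nonneg_of_isLocalMax_re_mul_exp (h.mono fun t ht => ?_)
  have := pow_le_pow_left₀ (norm_nonneg _) ht 2
  rw [hsq, hsq] at this
  linarith

theorem eq_of_pos_mul_of_pos_mul {s x y : ℂ} (hx : 0 < s * x) (hy : 0 < s * y)
    (hxy : ‖x‖ = ‖y‖) : x = y := by
  have hs : s ≠ 0 := by rintro rfl; simp at hx
  refine mul_left_cancel₀ hs ?_
  rw [eq_coe_norm_of_nonneg hx.le, eq_coe_norm_of_nonneg hy.le, norm_mul, norm_mul, hxy]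

end Complex

section PhasorSum

variable {ι : Type*} [Fintype ι] (a : ι → ℝ)

noncomputable def phasorSum (θ : EuclideanSpace ℝ ι) : ℂ :=
  ∑ i, (a i : ℂ) * exp ((θ i : ℂ) * I)

variable {a}

theorem norm_phasorSum_le (ha : ∀ i, 0 ≤ a i) (θ : EuclideanSpace ℝ ι) :
    ‖phasorSum a θ‖ ≤ ∑ i, a i :=
  (norm_sum_le _ _).trans_eq <| Finset.sum_congr rfl fun i _ => by
    rw [norm_mul, norm_exp_ofReal_mul_I, mul_one, norm_real, Real.norm_of_nonneg (ha i)]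

theorem norm_phasorSum_of_exp_eq (ha : ∀ i, 0 ≤ a i) {θ : EuclideanSpace ℝ ι}
    (hθ : ∀ i j, exp ((θ i : ℂ) * I) = exp ((θ j : ℂ) * I)) :
    ‖phasorSum a θ‖ = ∑ i, a i := by
  cases isEmpty_or_nonempty ι with
  | inl _ => simp [phasorSum]
  | inr hne =>
    obtain ⟨k⟩ := hne
    have hsum : phasorSum a θ = (∑ i, a i : ℝ) * exp ((θ k : ℂ) * I) := by
      rw [phasorSum, ofReal_sum, Finset.sum_mul]
      exact Finset.sum_congr rfl fun i _ => by rw [hθ i k]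
    rw [hsum, norm_mul, norm_exp_ofReal_mul_I, mul_one, norm_real,
      Real.norm_of_nonneg (Finset.sum_nonneg fun i _ => ha i)]

theorem phasorSum_add_smul_single [DecidableEq ι] (θ : EuclideanSpace ℝ ι) (k : ι) (t : ℝ) :
    phasorSum a (θ + t • EuclideanSpace.single k 1) =
      (phasorSum a θ - a k * exp ((θ k : ℂ) * I)) + a k * exp ((θ k : ℂ) * I) * exp (t * I) := by
  have hterm : ∀ i,
      (a i : ℂ) * exp (((θ + t • EuclideanSpace.single k 1 : EuclideanSpace ℝ ι) i : ℂ) * I) =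
        a i * exp ((θ i : ℂ) * I) +
          if i = k then a k * exp ((θ k : ℂ) * I) * (exp (t * I) - 1) else 0 := by
    intro i
    split_ifs with hik
    · subst hik
      simp only [PiLp.add_apply, PiLp.smul_apply, PiLp.single_apply, if_true, smul_eq_mul,
        mul_one, ofReal_add, add_mul, exp_add]
      ring
    · simp [hik]
  simp only [phasorSum, hterm, Finset.sum_add_distrib, Finset.sum_ite_eq', Finset.mem_univ,
    if_true]
  ring

theorem pos_conj_phasorSum_mul_exp_of_isLocalMax {θ : EuclideanSpace ℝ ι}
    (h : IsLocalMax (fun ψ => ‖phasorSum a ψ‖) θ) {k : ι} (hk : 0 < a k) :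
    0 < conj (phasorSum a θ) * exp ((θ k : ℂ) * I) := by
  classical
  have hline : IsLocalMax (fun t : ℝ => ‖(phasorSum a θ - a k * exp ((θ k : ℂ) * I)) +
      a k * exp ((θ k : ℂ) * I) * exp (t * I)‖) 0 := by
    have hcomp := IsLocalMax.comp_continuous (g := fun t : ℝ => θ + t • EuclideanSpace.single k 1)
      (b := 0) (by simpa using h) (by fun_prop)
    simpa only [Function.comp_def, phasorSum_add_smul_single] using hcomp
  set z := exp ((θ k : ℂ) * I)
  set w := conj (phasorSum a θ - a k * z) * z
  have hnonneg : 0 ≤ (a k : ℂ) * w := by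
    simpa only [w, mul_left_comm] using nonneg_conj_mul_of_isLocalMax_norm_add_mul_exp hline
  have hz : conj z * z = 1 := by
    rw [mul_comm, mul_conj, normSq_eq_norm_sq, norm_exp_ofReal_mul_I]; norm_num
  have hsplit : conj (phasorSum a θ) * z = w + a k := by
    simp only [w, map_sub, map_mul, conj_ofReal]
    linear_combination (a k : ℂ) * hz
  have hw : 0 ≤ w := by
    have := mul_nonneg (zero_le_real.2 (inv_nonneg.2 hk.le)) hnonneg
    rwa [← mul_assoc, ← ofReal_mul, inv_mul_cancel₀ hk.ne', ofReal_one, one_mul] at this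
  rw [hsplit]
  exact add_pos_of_nonneg_of_pos hw (zero_lt_real.2 hk)

theorem exp_eq_of_isLocalMax_norm_phasorSum (ha : ∀ i, 0 < a i) {θ : EuclideanSpace ℝ ι}
    (h : IsLocalMax (fun ψ => ‖phasorSum a ψ‖) θ) (i j : ι) :
    exp ((θ i : ℂ) * I) = exp ((θ j : ℂ) * I) :=
  eq_of_pos_mul_of_pos_mul (pos_conj_phasorSum_mul_exp_of_isLocalMax h (ha i))
    (pos_conj_phasorSum_mul_exp_of_isLocalMax h (ha j))
    (by rw [norm_exp_ofReal_mul_I, norm_exp_ofReal_mul_I])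

end PhasorSum

/-- For `Mag θ = |Σ_i a_i e^{jθ_i}|` with all `a_i > 0`: the global maximum value is
`Σ_i a_i`, every local maximum point is a global maximum point, and the maximum value is
attained exactly when all phases are equal modulo `2π`. -/
theorem mag_localMax_is_globalMax
    {N : ℕ} (a : Fin N → ℝ) (ha : ∀ i, 0 < a i)
    (Mag : EuclideanSpace ℝ (Fin N) → ℝ)
    (hMag : ∀ θ, Mag θ = ‖∑ i, (a i : ℂ) * Complex.exp ((θ i : ℂ) * Complex.I)‖) :
    (∀ θ, Mag θ ≤ ∑ i, a i) ∧
    (∀ θ, (∃ δ > 0, ∀ ψ ∈ Metric.ball θ δ, Mag ψ ≤ Mag θ) → Mag θ = ∑ i, a i) ∧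
    (∀ θ, Mag θ = ∑ i, a i ↔
      ∀ i j, Complex.exp ((θ i : ℂ) * Complex.I) = Complex.exp ((θ j : ℂ) * Complex.I)) := by
  obtain rfl : Mag = fun θ => ‖phasorSum a θ‖ := funext hMag
  have hle : ∀ θ, ‖phasorSum a θ‖ ≤ ∑ i, a i := norm_phasorSum_le fun i => (ha i).le
  have hnorm_of_exp_eq : ∀ θ, (∀ i j, exp ((θ i : ℂ) * I) = exp ((θ j : ℂ) * I)) →
      ‖phasorSum a θ‖ = ∑ i, a i := fun θ => norm_phasorSum_of_exp_eq fun i => (ha i).le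
  refine ⟨hle, fun θ ⟨δ, hδ, hball⟩ => hnorm_of_exp_eq θ ?_,
    fun θ => ⟨fun hθ => ?_, hnorm_of_exp_eq θ⟩⟩
  · exact exp_eq_of_isLocalMax_norm_phasorSum ha
      (Filter.eventually_of_mem (Metric.ball_mem_nhds θ hδ) hball)
  · exact exp_eq_of_isLocalMax_norm_phasorSum ha
      (Filter.Eventually.of_forall fun ψ => (hle ψ).trans hθ.ge)
end

section
/- Let f : ℝ^N → ℝ be continuous with global maximum value f* = f(θ*), every local maximum global, and suppose the sets {θ : f(θ) = c} have empty interior for all c < f*. If θ satisfies f(θ) < f*, then θ belongs to the closure of the strict superlevel set {ψ : f(ψ) > f(θ)}. -/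
/-- If `f` is continuous, every local maximum is global, and every level set below the
maximum value has empty interior, then every non-optimal point lies in the closure of
its strict superlevel set: arbitrarily close to it there are points with strictly larger
`f`-value. -/
theorem mem_closure_strict_superlevel
    {N : ℕ} (f : EuclideanSpace ℝ (Fin N) → ℝ) (hf : Continuous f)
    (θs : EuclideanSpace ℝ (Fin N)) (hmax : ∀ θ, f θ ≤ f θs)
    (hloc : ∀ θ, (∃ δ > 0, ∀ ψ ∈ Metric.ball θ δ, f ψ ≤ f θ) → f θ = f θs)
    (hlevel : ∀ c : ℝ, c < f θs → interior {θ | f θ = c} = ∅)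
    (θ : EuclideanSpace ℝ (Fin N)) (hθ : f θ < f θs) :
    θ ∈ closure {ψ | f θ < f ψ} := by
  by_contra h
  rw [Metric.mem_closure_iff] at h
  push_neg at h
  obtain ⟨ε, hε, hball⟩ := h
  have := hloc θ ⟨ε, hε, fun ψ hψ => by
    by_contra hfs
    push_neg at hfs
    exact absurd (Metric.mem_ball'.mp hψ) (not_lt.mpr (hball ψ hfs))⟩
  exact absurd this (ne_of_lt hθ)
end
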